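/- Let V be a finite set, J and H multigraphs on V, k an integer, R ⊆ V, and T a nonempty proper subset of V\R (so (V\R)\T ≠ ∅). Assume: (a) if d_H(T, (V\R)\T) ≥ 1 then d_J(T, (V\R)\T) ≥ ⌈(k−3)/2⌉; (b) d_J(T) ≥ k − 2·d_H(T) − 2 and d_J((V\R)\T) ≥ k − 2·d_H((V\R)\T) − 2; (c) d_J(R) ≤ k − 2·d_H(R) + 2. Then 2·d_J(T, (V\R)\T) ≥ k − 6, i.e., d_J(T, (V\R)\T) ≥ ⌈(k−6)/2⌉. -/

import Mathlib

/-!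
If some `H`-edge joins `T` to `T' = (V \ R) \ T`, hypothesis (a) already gives the bound.
Otherwise `d_H(T, T') = 0`, and for a symmetric `m` the identity
`d_m(T) + d_m(T') = d_m(R) + 2 d_m(T, T')` (as `T ∪ T' = V \ R`) turns the sum of the two
inequalities (b) into `d_J(R) + 2 d_J(T, T') ≥ 2k - 2 d_H(R) - 4`; subtracting (c) leaves
`2 d_J(T, T') ≥ k - 6`.
-/

open Finset

variable {V : Type*} [Fintype V] [DecidableEq V]

/-- `d_m(S,T)`: total multiplicity of edges of the multigraph `m` with one end in `S` and
the other in `T` (for disjoint `S`, `T`). -/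
def dBetween (m : V → V → ℕ) (S T : Finset V) : ℕ := ∑ u ∈ S, ∑ v ∈ T, m u v

/-- `d_m(S) = d_m(S, V \ S)`. -/
def degS (m : V → V → ℕ) (S : Finset V) : ℕ := dBetween m S Sᶜ

section Cuts

variable (m : V → V → ℕ)

omit [Fintype V] in
lemma dBetween_union_left {A B : Finset V} (h : Disjoint A B) (S : Finset V) :
    dBetween m (A ∪ B) S = dBetween m A S + dBetween m B S :=
  sum_union h

omit [Fintype V] in
lemma dBetween_union_right (S : Finset V) {A B : Finset V} (h : Disjoint A B) :
    dBetween m S (A ∪ B) = dBetween m S A + dBetween m S B := by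
  rw [dBetween, dBetween, dBetween, ← sum_add_distrib]
  exact sum_congr rfl fun _ _ => sum_union h

variable {m}

omit [Fintype V] [DecidableEq V] in
lemma dBetween_comm (hm : ∀ a b, m a b = m b a) (A B : Finset V) :
    dBetween m A B = dBetween m B A := by
  rw [dBetween, dBetween, sum_comm]
  exact sum_congr rfl fun _ _ => sum_congr rfl fun _ _ => hm _ _

lemma degS_compl (hm : ∀ a b, m a b = m b a) (S : Finset V) : degS m Sᶜ = degS m S := by
  rw [degS, degS, compl_compl, dBetween_comm hm]

lemma degS_add_degS_of_disjoint (hm : ∀ a b, m a b = m b a) {A B : Finset V}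
    (h : Disjoint A B) :
    degS m A + degS m B = degS m (A ∪ B) + 2 * dBetween m A B := by
  have hAB : ∀ x, x ∈ A → x ∉ B := fun _ hx => disjoint_left.1 h hx
  have hAc : Aᶜ = B ∪ (A ∪ B)ᶜ := by
    ext x; have := hAB x; simp only [mem_compl, mem_union]; tauto
  have hBc : Bᶜ = A ∪ (A ∪ B)ᶜ := by
    ext x; have := hAB x; simp only [mem_compl, mem_union]; tauto
  rw [degS, degS, degS, hAc, hBc,
    dBetween_union_right _ _ (disjoint_compl_right.mono_left subset_union_right),
    dBetween_union_right _ _ (disjoint_compl_right.mono_left subset_union_left),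
    dBetween_union_left _ h, dBetween_comm hm B A]
  ring

lemma degS_add_degS_sdiff (hm : ∀ a b, m a b = m b a) {R T : Finset V} (hTR : T ⊆ Rᶜ) :
    degS m T + degS m (Rᶜ \ T) = degS m R + 2 * dBetween m T (Rᶜ \ T) := by
  rw [degS_add_degS_of_disjoint hm disjoint_sdiff, union_sdiff_of_subset hTR, degS_compl hm]

end Cuts

lemma ceil_half_le_iff (a n : ℤ) : ⌈(a : ℚ) / 2⌉ ≤ n ↔ a ≤ 2 * n := by
  rw [Int.ceil_le, div_le_iff₀ two_pos, mul_comm]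
  exact_mod_cast Iff.rfl

theorem edges_outside_contracted_set_general
    (J H : V → V → ℕ)
    (hJsymm : ∀ a b, J a b = J b a) (hHsymm : ∀ a b, H a b = H b a)
    (k : ℤ) (R T : Finset V)
    (hTR : T ⊆ Rᶜ)
    (ha : 1 ≤ dBetween H T (Rᶜ \ T) →
      ⌈((k : ℚ) - 3) / 2⌉ ≤ (dBetween J T (Rᶜ \ T) : ℤ))
    (hb1 : k - 2 * (degS H T : ℤ) - 2 ≤ (degS J T : ℤ))
    (hb2 : k - 2 * (degS H (Rᶜ \ T) : ℤ) - 2 ≤ (degS J (Rᶜ \ T) : ℤ))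
    (hc : (degS J R : ℤ) ≤ k - 2 * (degS H R : ℤ) + 2) :
    k - 6 ≤ 2 * (dBetween J T (Rᶜ \ T) : ℤ) ∧
      ⌈((k : ℚ) - 6) / 2⌉ ≤ (dBetween J T (Rᶜ \ T) : ℤ) := by
  have key : k - 6 ≤ 2 * (dBetween J T (Rᶜ \ T) : ℤ) := by
    rcases Nat.eq_zero_or_pos (dBetween H T (Rᶜ \ T)) with hH | hH
    · have hJsplit := degS_add_degS_sdiff hJsymm hTR
      have hHsplit := degS_add_degS_sdiff hHsymm hTR
      omega
    · have := (ceil_half_le_iff (k - 3) _).1 (by exact_mod_cast ha hH)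
      omega
  refine ⟨key, ?_⟩
  exact_mod_cast (ceil_half_le_iff (k - 6) _).2 key

/-- Lemma 3.5: for a contracted set `R` and a nonempty proper subset `T` of `V \ R`,
`d_J(T, (V \ R) \ T) ≥ ⌈(k-6)/2⌉`. -/
theorem edges_outside_contracted_set
    (J H : V → V → ℕ)
    (hJsymm : ∀ a b, J a b = J b a) (hHsymm : ∀ a b, H a b = H b a)
    (k : ℤ) (R T : Finset V)
    (hTR : T ⊆ Rᶜ) (hTne : T.Nonempty) (hTprop : T ≠ Rᶜ)
    (ha : 1 ≤ dBetween H T (Rᶜ \ T) →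
      ⌈((k : ℚ) - 3) / 2⌉ ≤ (dBetween J T (Rᶜ \ T) : ℤ))
    (hb1 : k - 2 * (degS H T : ℤ) - 2 ≤ (degS J T : ℤ))
    (hb2 : k - 2 * (degS H (Rᶜ \ T) : ℤ) - 2 ≤ (degS J (Rᶜ \ T) : ℤ))
    (hc : (degS J R : ℤ) ≤ k - 2 * (degS H R : ℤ) + 2) :
    k - 6 ≤ 2 * (dBetween J T (Rᶜ \ T) : ℤ) ∧
      ⌈((k : ℚ) - 6) / 2⌉ ≤ (dBetween J T (Rᶜ \ T) : ℤ) :=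
  edges_outside_contracted_set_general J H hJsymm hHsymm k R T hTR ha hb1 hb2 hc
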